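/- Let Δ ⊂ ℝⁿ be a bounded open convex polytope defined by linear inequalities h_k(ξ) - c_k > 0 for k = 1,…,d, where each h_k is affine. Then the function v(ξ) = Σ_k (h_k(ξ) - c_k) log(h_k(ξ) - c_k) is strictly convex on Δ. -/
import Mathlib

open Real

/-- The Guillemin potential `v(ξ) = Σ_k (h_k ξ - c_k) log (h_k ξ - c_k)`
is strictly convex on the bounded open polytope `Δ = {ξ | ∀ k, h_k ξ - c_k > 0}`. -/
theorem guillemin_potential_strictly_convex
    (n d : ℕ) (h : Fin d → ((Fin n → ℝ) →ᵃ[ℝ] ℝ)) (c : Fin d → ℝ)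
    (Δ : Set (Fin n → ℝ))
    (hΔ : Δ = {ξ : Fin n → ℝ | ∀ k : Fin d, h k ξ - c k > 0})
    (hbd : Bornology.IsBounded Δ) (hne : Δ.Nonempty)
    (v : (Fin n → ℝ) → ℝ)
    (hv : ∀ ξ, v ξ = ∑ k : Fin d, (h k ξ - c k) * Real.log (h k ξ - c k)) :
    StrictConvexOn ℝ Δ v := by
  have haff : ∀ (k : Fin d) (x y : Fin n → ℝ) (a b : ℝ), a + b = 1 →
      h k (a • x + b • y) - c k = a * (h k x - c k) + b * (h k y - c k) := by
    intro k x y a b hab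
    rw [Convex.combo_affine_apply hab]
    simp only [smul_eq_mul]
    linear_combination (c k) * hab
  have hconv : Convex ℝ Δ := by
    subst hΔ
    intro x hx y hy a b ha hb hab
    intro k
    have hx' := hx k
    have hy' := hy k
    rw [haff k x y a b hab]
    rcases eq_or_lt_of_le ha with h0 | h0
    · rcases eq_or_lt_of_le hb with h1 | h1
      · exfalso; rw [← h0, ← h1] at hab; simp at hab
      · nlinarith
    · nlinarith [mul_nonneg hb hy'.le]
  refine ⟨hconv, ?_⟩
  intro x hx y hy hxy a b ha hb hab
  have hexist : ∃ k, h k x ≠ h k y := by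
    by_contra hall
    push_neg at hall
    obtain ⟨R, hR⟩ := hbd.subset_closedBall 0
    have hyx : y - x ≠ 0 := sub_ne_zero.mpr (Ne.symm hxy)
    have hline : ∀ t : ℝ, x + t • (y - x) ∈ Δ := by
      intro t
      rw [hΔ]
      intro k
      have hlin : (h k).linear (y - x) = 0 := by
        have h2 := AffineMap.linearMap_vsub (h k) y x
        simp only [vsub_eq_sub] at h2
        rw [h2, hall k, sub_self]
      have heq : h k (x + t • (y - x)) = h k x := by
        have h3 := (h k).map_vadd x (t • (y - x))
        simp only [vadd_eq_add, add_comm] at h3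
        rw [h3, map_smul, hlin, smul_zero, add_zero]
      simp only [Set.mem_setOf_eq, heq]
      exact (hΔ ▸ hx) k
    have hnorm : (0:ℝ) < ‖y - x‖ := norm_pos_iff.mpr hyx
    set t : ℝ := (R + ‖x‖ + 1) / ‖y - x‖ with ht
    have hmem := hR (hline t)
    rw [Metric.mem_closedBall, dist_zero_right] at hmem
    have h1 : ‖t • (y - x)‖ ≤ ‖x + t • (y - x)‖ + ‖x‖ := by
      calc ‖t • (y - x)‖ = ‖x + t • (y - x) - x‖ := by rw [add_sub_cancel_left]
        _ ≤ ‖x + t • (y - x)‖ + ‖x‖ := norm_sub_le _ _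
    have h2 : ‖t • (y - x)‖ = R + ‖x‖ + 1 := by
      have hRnn : (0:ℝ) ≤ R := le_trans (norm_nonneg _) (by
        obtain ⟨z, hz⟩ := hne
        have := hR hz
        rwa [Metric.mem_closedBall, dist_zero_right] at this)
      rw [norm_smul, Real.norm_eq_abs, abs_of_pos (by positivity), ht,
        div_mul_cancel₀ _ (ne_of_gt hnorm)]
    linarith [h1, h2, hmem]
  obtain ⟨k₀, hk₀⟩ := hexist
  have hxmem : ∀ k, h k x - c k ∈ Set.Ici (0:ℝ) := fun k => ((hΔ ▸ hx) k).le
  have hymem : ∀ k, h k y - c k ∈ Set.Ici (0:ℝ) := fun k => ((hΔ ▸ hy) k).le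
  rw [hv, hv, hv]
  have hrhs : a • ∑ k : Fin d, (h k x - c k) * Real.log (h k x - c k)
      + b • ∑ k : Fin d, (h k y - c k) * Real.log (h k y - c k)
      = ∑ k : Fin d, (a • ((h k x - c k) * Real.log (h k x - c k))
        + b • ((h k y - c k) * Real.log (h k y - c k))) := by
    rw [Finset.smul_sum, Finset.smul_sum, Finset.sum_add_distrib]
  rw [hrhs]
  apply Finset.sum_lt_sum
  · intro k _
    have := Real.convexOn_mul_log.2 (hxmem k) (hymem k) ha.le hb.le hab
    simp only [smul_eq_mul] at this ⊢
    rw [haff k x y a b hab]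
    exact this
  · refine ⟨k₀, Finset.mem_univ k₀, ?_⟩
    have hne' : h k₀ x - c k₀ ≠ h k₀ y - c k₀ := by
      intro hcon; apply hk₀; linarith [sub_left_injective.eq_iff.mp hcon]
    have := Real.strictConvexOn_mul_log.2 (hxmem k₀) (hymem k₀) hne' ha hb hab
    simp only [smul_eq_mul] at this ⊢
    rw [haff k₀ x y a b hab]
    exact this
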